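/- arXiv:1310.5634 — 8 statements merged into one kernel-verified Lean document; each statement's English description precedes it below -/
import Mathlib

section
/- For every positive integer p, one has (p!)^{1/p} / ((p+1)!)^{1/(p+1)} < ((p+1)!)^{1/(p+1)} / ((p+2)!)^{1/(p+2)}; that is, the sequence a_p := (p!)^{1/p} / ((p+1)!)^{1/(p+1)} is strictly increasing in p. -/
open Nat Real

lemma fac_pow_le (n : ℕ) : 2^n * (n ! : ℝ) ≤ ((n:ℝ)+1)^n := by
  induction n with
  | zero => simp
  | succ n ih =>
    have hn : (0:ℝ) < (n:ℝ)+1 := by positivity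
    have h2 : (2:ℝ) ≤ (1 + 1/((n:ℝ)+1))^(n+1) := by
      have ha : (-2:ℝ) ≤ 1/((n:ℝ)+1) := by
        have : (0:ℝ) ≤ 1/((n:ℝ)+1) := by positivity
        linarith
      have h := one_add_mul_le_pow ha (n+1)
      push_cast at h
      have he : 1 + ((n:ℝ)+1) * (1/((n:ℝ)+1)) = 2 := by field_simp; ring
      nlinarith [h]
    have step : 2 * ((n:ℝ)+1)^(n+1) ≤ ((n:ℝ)+2)^(n+1) := by
      have hm := mul_le_mul_of_nonneg_left h2 (le_of_lt (pow_pos hn (n+1)))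
      calc 2 * ((n:ℝ)+1)^(n+1) = ((n:ℝ)+1)^(n+1) * 2 := by ring
        _ ≤ ((n:ℝ)+1)^(n+1) * (1 + 1/((n:ℝ)+1))^(n+1) := hm
        _ = (((n:ℝ)+1) * (1 + 1/((n:ℝ)+1)))^(n+1) := (mul_pow _ _ _).symm
        _ = ((n:ℝ)+2)^(n+1) := by rw [show ((n:ℝ)+1) * (1 + 1/((n:ℝ)+1)) = (n:ℝ)+2 by field_simp; ring]
    push_cast [Nat.factorial_succ]
    calc 2^(n+1) * (((n:ℝ)+1) * (n ! : ℝ)) = 2*((n:ℝ)+1) * (2^n * (n ! : ℝ)) := by ring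
      _ ≤ 2*((n:ℝ)+1) * ((n:ℝ)+1)^n := by
          apply mul_le_mul_of_nonneg_left ih (by positivity)
      _ = 2 * ((n:ℝ)+1)^(n+1) := by ring
      _ ≤ ((n:ℝ)+2)^(n+1) := step
      _ = ((n:ℝ)+1+1)^(n+1) := by ring

lemma aux_frac (P x u v : ℝ) (hP : 0 < P)
    (key : 2*x + P*(P+1)*v < P*(P+3)*u) :
    1/P * x + 1/(P+2) * (x+u+v) < 1/(P+1) * (x+u) + 1/(P+1) * (x+u) := by
  rw [← sub_pos]
  have h : 1/(P+1)*(x+u) + 1/(P+1)*(x+u) - (1/P * x + 1/(P+2) * (x+u+v))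
      = (P*(P+3)*u - (2*x + P*(P+1)*v)) / (P*(P+1)*(P+2)) := by
    field_simp
    ring
  rw [h]
  exact div_pos (by linarith) (by positivity)

/-- Wanless' inequality: the sequence `a_p = (p!)^{1/p} / ((p+1)!)^{1/(p+1)}`
is strictly increasing, i.e. for every positive integer `p`,
`(p!)^{1/p} / ((p+1)!)^{1/(p+1)} < ((p+1)!)^{1/(p+1)} / ((p+2)!)^{1/(p+2)}`. -/
theorem stmt_0 (p : ℕ) (hp : 0 < p) :
    (p ! : ℝ) ^ (1 / (p : ℝ)) / ((p + 1)! : ℝ) ^ (1 / ((p : ℝ) + 1)) <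
      ((p + 1)! : ℝ) ^ (1 / ((p : ℝ) + 1)) / ((p + 2)! : ℝ) ^ (1 / ((p : ℝ) + 2)) := by
  set P : ℝ := (p:ℝ) with hPdef
  have hP : 0 < P := by rw [hPdef]; exact_mod_cast hp
  have hF0 : (0:ℝ) < (p ! : ℝ) := by exact_mod_cast Nat.factorial_pos p
  have hF1 : (0:ℝ) < ((p+1)! : ℝ) := by exact_mod_cast Nat.factorial_pos (p+1)
  have hF2 : (0:ℝ) < ((p+2)! : ℝ) := by exact_mod_cast Nat.factorial_pos (p+2)
  rw [div_lt_div_iff₀ (Real.rpow_pos_of_pos hF1 _) (Real.rpow_pos_of_pos hF2 _),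
      ← Real.log_lt_log_iff (mul_pos (Real.rpow_pos_of_pos hF0 _) (Real.rpow_pos_of_pos hF2 _)) (mul_pos (Real.rpow_pos_of_pos hF1 _) (Real.rpow_pos_of_pos hF1 _)),
      Real.log_mul (ne_of_gt (Real.rpow_pos_of_pos hF0 _)) (ne_of_gt (Real.rpow_pos_of_pos hF2 _)),
      Real.log_mul (ne_of_gt (Real.rpow_pos_of_pos hF1 _)) (ne_of_gt (Real.rpow_pos_of_pos hF1 _)),
      Real.log_rpow hF0, Real.log_rpow hF1, Real.log_rpow hF2]
  set x := Real.log (p ! : ℝ) with hx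
  set u := Real.log (P+1) with hu
  set v := Real.log (P+2) with hv
  have e1 : Real.log ((p+1)! : ℝ) = x + u := by
    rw [show ((p+1)! : ℝ) = (P+1) * (p ! : ℝ) by push_cast [Nat.factorial_succ]; ring,
        Real.log_mul (by positivity) (by positivity)]
    ring
  have e2 : Real.log ((p+2)! : ℝ) = x + u + v := by
    rw [show ((p+2)! : ℝ) = (P+2) * ((P+1) * (p ! : ℝ)) by
          push_cast [Nat.factorial_succ]; ring,
        Real.log_mul (by positivity) (by positivity),
        Real.log_mul (by positivity) (by positivity)]
    ring
  rw [e1, e2]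
  apply aux_frac P x u v hP
  -- key inequality
  have h1 : v - u < 1/(P+1) := by
    have hne : (P+2)/(P+1) ≠ 1 := by
      intro h
      rw [div_eq_one_iff_eq (by positivity : (P+1) ≠ 0)] at h
      linarith
    have hlt := Real.log_lt_sub_one_of_pos (x := (P+2)/(P+1)) (by positivity) hne
    rw [Real.log_div (by positivity) (by positivity)] at hlt
    have he : (P+2)/(P+1) - 1 = 1/(P+1) := by field_simp; ring
    rw [he] at hlt
    exact hlt
  have h2 : x ≤ P*u - P*Real.log 2 := by
    have hle := fac_pow_le p
    have := Real.log_le_log (by positivity) hle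
    rw [Real.log_mul (by positivity) (by positivity), Real.log_pow, Real.log_pow] at this
    simp only [← hx, ← hu] at this
    push_cast at this ⊢
    linarith
  have h3 : (0.6931471803 : ℝ) < Real.log 2 := Real.log_two_gt_d9
  have h1' : (P+1)*(v-u) < 1 := by
    have := (mul_lt_mul_iff_right₀ (show (0:ℝ) < P+1 by linarith)).mpr h1
    calc (P+1)*(v-u) < (P+1)*(1/(P+1)) := this
      _ = 1 := by field_simp
  nlinarith [mul_lt_mul_of_pos_left h1' hP, mul_pos hP hP]
end

section
/- For every positive integer p, one has (p!)^2 · (p+2)^{p(p+1)} ≤ (p+1)^{p(p+3)}. -/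
/-!
Bernoulli's inequality gives `2 n^n ≤ (n+1)^n`, which telescopes to `2^p p! ≤ (p+1)^p`, while
`(1 + 1/n)^n ≤ e < 3` gives `(p+2)^(p+1) ≤ 3 (p+1)^(p+1)`. Squaring the first bound and raising the
second to the power `p`, the factors `4^p` and `3^p ≤ 4^p` cancel.
-/

open Nat

theorem two_mul_pow_self_le_succ_pow {n : ℕ} (hn : n ≠ 0) : 2 * n ^ n ≤ (n + 1) ^ n := by
  have h := pow_add_mul_le_add_pow (a := n) (b := 1) (Nat.zero_le n) (by omega) n
  rwa [Nat.cast_id, mul_one, mul_pow_sub_one hn, ← two_mul] at h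

theorem two_pow_mul_factorial_le_succ_pow (n : ℕ) : 2 ^ n * n ! ≤ (n + 1) ^ n := by
  induction n with
  | zero => simp
  | succ n ih =>
    calc 2 ^ (n + 1) * (n + 1)! = 2 * (n + 1) * (2 ^ n * n !) := by
          rw [factorial_succ]; ring
      _ ≤ 2 * (n + 1) * (n + 1) ^ n := by gcongr
      _ = 2 * (n + 1) ^ (n + 1) := by ring
      _ ≤ (n + 1 + 1) ^ (n + 1) := two_mul_pow_self_le_succ_pow n.succ_ne_zero

theorem succ_pow_self_le_three_mul_pow_self (n : ℕ) : (n + 1) ^ n ≤ 3 * n ^ n := by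
  rcases Nat.eq_zero_or_pos n with rfl | hn
  · simp
  have hn' : (0 : ℝ) < n := by exact_mod_cast hn
  have hbase : ((n : ℝ) + 1) = (1 + (n : ℝ)⁻¹) * n := by field_simp
  have : ((n : ℝ) + 1) ^ n ≤ 3 * (n : ℝ) ^ n := by
    rw [hbase, mul_pow]
    gcongr
    exact Real.one_add_inv_pow_le_exp.trans Real.exp_one_lt_three.le
  exact_mod_cast this

theorem stmt_1_general (p : ℕ) :
    (p !) ^ 2 * (p + 2) ^ (p * (p + 1)) ≤ (p + 1) ^ (p * (p + 3)) := by
  have hfact : (2 ^ p * p !) ^ 2 ≤ ((p + 1) ^ p) ^ 2 := by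
    gcongr; exact two_pow_mul_factorial_le_succ_pow p
  have hpow : (p + 2) ^ (p * (p + 1)) ≤ 4 ^ p * (p + 1) ^ (p * (p + 1)) := by
    calc (p + 2) ^ (p * (p + 1)) = ((p + 1 + 1) ^ (p + 1)) ^ p := by rw [mul_comm, pow_mul]
      _ ≤ (3 * (p + 1) ^ (p + 1)) ^ p := by gcongr; exact succ_pow_self_le_three_mul_pow_self _
      _ ≤ (4 * (p + 1) ^ (p + 1)) ^ p := by gcongr; norm_num
      _ = 4 ^ p * (p + 1) ^ (p * (p + 1)) := by rw [mul_pow, ← pow_mul, mul_comm (p + 1)]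
  refine Nat.le_of_mul_le_mul_left ?_ (by positivity : 0 < 4 ^ p)
  calc 4 ^ p * ((p !) ^ 2 * (p + 2) ^ (p * (p + 1)))
      = (2 ^ p * p !) ^ 2 * (p + 2) ^ (p * (p + 1)) := by
        rw [show 4 ^ p = (2 ^ p) ^ 2 by rw [← pow_mul, mul_comm, pow_mul]; norm_num]; ring
    _ ≤ ((p + 1) ^ p) ^ 2 * (4 ^ p * (p + 1) ^ (p * (p + 1))) := by gcongr
    _ = 4 ^ p * (p + 1) ^ (p * (p + 3)) := by
        rw [mul_left_comm, ← pow_mul, ← pow_add]; ring_nf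

/-- For every positive integer `p`, `(p!)² · (p+2)^{p(p+1)} ≤ (p+1)^{p(p+3)}`. -/
theorem stmt_1 (p : ℕ) (hp : 0 < p) :
    (p !) ^ 2 * (p + 2) ^ (p * (p + 1)) ≤ (p + 1) ^ (p * (p + 3)) :=
  stmt_1_general p
end

section
/- Let p and q be positive integers with p ≤ q - 2. Then (p!)^{1/p} · (q!)^{1/q} < ((p+1)!)^{1/(p+1)} · ((q-1)!)^{1/(q-1)}. -/
open Nat

noncomputable def Lf (n : ℕ) : ℝ := Real.log (n ! : ℝ)
noncomputable def Sf (n : ℕ) : ℝ := n * Real.log (n + 1) - Lf n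
noncomputable def df (n : ℕ) : ℝ := Lf (n+1) / (n+1) - Lf n / n

lemma Lf_succ (n : ℕ) : Lf (n+1) = Real.log ((n:ℝ)+1) + Lf n := by
  unfold Lf
  rw [Nat.factorial_succ, Nat.cast_mul, Nat.cast_add, Nat.cast_one,
    Real.log_mul (by positivity) (by exact_mod_cast n.factorial_ne_zero)]

lemma Sf_rec (n : ℕ) :
    Sf (n+1) = Sf n + ((n:ℝ)+1) * (Real.log ((n:ℝ)+2) - Real.log ((n:ℝ)+1)) := by
  unfold Sf
  rw [Lf_succ]
  push_cast
  have h2 : ((n:ℝ) + 1 + 1) = (n:ℝ) + 2 := by ring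
  rw [h2]
  ring

lemma term_ge (m : ℕ) (hm : 1 ≤ m) :
    Real.log 2 ≤ (m:ℝ) * (Real.log ((m:ℝ)+1) - Real.log (m:ℝ)) := by
  have hm0 : (0:ℝ) < m := by exact_mod_cast hm
  have h1 : (2:ℝ) ≤ (((m:ℝ)+1)/m) ^ m := by
    have he : ((m:ℝ)+1)/m = 1 + 1/m := by field_simp
    rw [he]
    have h : (-2:ℝ) ≤ 1/m := le_trans (by norm_num) (by positivity : (0:ℝ) ≤ 1/(m:ℝ))
    have := one_add_mul_le_pow h m
    have hmm : (m:ℝ) * (1/m) = 1 := by field_simp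
    nlinarith
  have h2 := Real.log_le_log (by norm_num) h1
  rw [Real.log_pow, Real.log_div (by positivity) (ne_of_gt hm0)] at h2
  calc Real.log 2 ≤ (m:ℝ) * (Real.log ((m:ℝ)+1) - Real.log m) := by exact_mod_cast h2
  _ = _ := by ring

lemma term_lt (n : ℕ) : ((n:ℝ)+1) * (Real.log ((n:ℝ)+2) - Real.log ((n:ℝ)+1)) < 1 := by
  have h1 : (0:ℝ) < (n:ℝ)+1 := by positivity
  have h2 : Real.log (((n:ℝ)+2)/((n:ℝ)+1)) < ((n:ℝ)+2)/((n:ℝ)+1) - 1 := by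
    apply Real.log_lt_sub_one_of_pos (by positivity)
    intro h
    rw [div_eq_one_iff_eq (ne_of_gt h1)] at h
    linarith
  rw [Real.log_div (by positivity) (by positivity)] at h2
  have h3 : ((n:ℝ)+2)/((n:ℝ)+1) - 1 = 1/((n:ℝ)+1) := by field_simp; ring
  rw [h3] at h2
  calc ((n:ℝ)+1) * (Real.log ((n:ℝ)+2) - Real.log ((n:ℝ)+1))
      < ((n:ℝ)+1) * (1/((n:ℝ)+1)) := by exact (mul_lt_mul_iff_right₀ h1).mpr h2
  _ = 1 := by field_simp

lemma S_ge (n : ℕ) (hn : 1 ≤ n) : (n:ℝ) * Real.log 2 ≤ Sf n := by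
  induction n with
  | zero => omega
  | succ k ih =>
    rcases Nat.eq_or_lt_of_le hn with h | h
    · have hk : k = 0 := by omega
      subst hk
      simp [Sf, Lf]
      norm_num
    · have hk : 1 ≤ k := by omega
      have := ih hk
      rw [Sf_rec]
      have ht : Real.log 2 ≤ ((k:ℝ)+1) * (Real.log ((k:ℝ)+2) - Real.log ((k:ℝ)+1)) := by
        have h2 := term_ge (k+1) (by omega)
        push_cast at h2
        convert h2 using 3 <;> ring
      push_cast
      linarith

lemma df_eq (n : ℕ) (hn : 1 ≤ n) : df n = Sf n / ((n:ℝ) * ((n:ℝ)+1)) := by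
  have hn0 : (0:ℝ) < n := by exact_mod_cast hn
  unfold df Sf
  rw [Lf_succ]
  push_cast
  field_simp
  ring

lemma key (n : ℕ) (hn : 1 ≤ n) : df (n+1) < df n := by
  have hn0 : (0:ℝ) < n := by exact_mod_cast hn
  rw [df_eq n hn, df_eq (n+1) (by omega)]
  push_cast
  rw [div_lt_div_iff₀ (by positivity) (by positivity)]
  rw [Sf_rec]
  have hS := S_ge n hn
  have ht := term_lt n
  have hlog : (0.6931471803 : ℝ) < Real.log 2 := Real.log_two_gt_d9
  nlinarith [mul_pos hn0 (show (0:ℝ) < (n:ℝ)+1 by positivity)]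

lemma df_lt (p : ℕ) (hp : 1 ≤ p) : ∀ m, p < m → df m < df p := by
  intro m
  induction m with
  | zero => omega
  | succ k ih =>
    intro hm
    rcases Nat.eq_or_lt_of_le (Nat.le_of_lt_succ hm) with h | h
    · subst h; exact key p hp
    · exact lt_trans (key k (by omega)) (ih h)

/-- If `p, q` are positive integers with `p ≤ q - 2`, then
`(p!)^{1/p} · (q!)^{1/q} < ((p+1)!)^{1/(p+1)} · ((q-1)!)^{1/(q-1)}`. -/
theorem stmt_2 (p q : ℕ) (hp : 0 < p) (hpq : p + 2 ≤ q) :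
    (p ! : ℝ) ^ (1 / (p : ℝ)) * (q ! : ℝ) ^ (1 / (q : ℝ)) <
      ((p + 1)! : ℝ) ^ (1 / ((p : ℝ) + 1)) * ((q - 1)! : ℝ) ^ (1 / ((q : ℝ) - 1)) := by
  obtain ⟨k, rfl⟩ : ∃ k, q = k + 1 := ⟨q - 1, by omega⟩
  have hk : p < k := by omega
  have hd := df_lt p hp k hk
  unfold df at hd
  have hp0 : (0:ℝ) < p := by exact_mod_cast hp
  have hk0 : (0:ℝ) < k := by exact_mod_cast (by omega : 0 < k)
  have e1 : (p ! : ℝ) ^ (1 / (p : ℝ)) = Real.exp (Lf p * (1/(p:ℝ))) := by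
    rw [Real.rpow_def_of_pos (by exact_mod_cast p.factorial_pos)]; rfl
  have e2 : ((k+1)! : ℝ) ^ (1 / ((k:ℝ)+1)) = Real.exp (Lf (k+1) * (1/((k:ℝ)+1))) := by
    rw [Real.rpow_def_of_pos (by exact_mod_cast (k+1).factorial_pos)]; rfl
  have e3 : ((p+1)! : ℝ) ^ (1 / ((p:ℝ)+1)) = Real.exp (Lf (p+1) * (1/((p:ℝ)+1))) := by
    rw [Real.rpow_def_of_pos (by exact_mod_cast (p+1).factorial_pos)]; rfl
  have e4 : (k ! : ℝ) ^ (1 / (k:ℝ)) = Real.exp (Lf k * (1/(k:ℝ))) := by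
    rw [Real.rpow_def_of_pos (by exact_mod_cast k.factorial_pos)]; rfl
  have hq1 : ((k:ℝ)+1) = ((k+1 : ℕ) : ℝ) := by push_cast; ring
  have hs : (k + 1 - 1) = k := by omega
  rw [hs, show ((k+1 : ℕ) : ℝ) - 1 = (k:ℝ) by push_cast; ring,
    show ((k+1 : ℕ) : ℝ) = (k:ℝ)+1 by push_cast; ring, e1, e2, e3, e4,
    ← Real.exp_add, ← Real.exp_add, Real.exp_lt_exp]
  have l1 : Lf (k+1) * (1/((k:ℝ)+1)) = Lf (k+1) / ((k:ℝ)+1) := by ring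
  have l2 : Lf k * (1/(k:ℝ)) = Lf k / (k:ℝ) := by ring
  have l3 : Lf (p+1) * (1/((p:ℝ)+1)) = Lf (p+1) / ((p:ℝ)+1) := by ring
  have l4 : Lf p * (1/(p:ℝ)) = Lf p / (p:ℝ) := by ring
  push_cast at hd ⊢
  linarith [hd]
end

section
/- Let p and q be positive integers. Then (p!)^{1/p} · (q!)^{1/q} ≤ (⌊(p+q)/2⌋!)^{1/⌊(p+q)/2⌋} · (⌈(p+q)/2⌉!)^{1/⌈(p+q)/2⌉}, and equality holds if and only if the unordered pair {p, q} equals {⌊(p+q)/2⌋, ⌈(p+q)/2⌉}. -/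
open Nat

lemma fact_amgm (n : ℕ) : ((n ! : ℝ)) * 2 ^ n ≤ (n + 1 : ℝ) ^ n := by
  induction n with
  | zero => norm_num
  | succ n ih =>
    have hpos : (0:ℝ) < n + 1 := by positivity
    have hb : (2:ℝ) * (n+1)^(n+1) ≤ (n+2)^(n+1) := by
      have h0 : (0:ℝ) ≤ 1/((n:ℝ)+1) := by positivity
      have hm2 : (-2:ℝ) ≤ 1/((n:ℝ)+1) := le_trans (by norm_num) h0
      have h := one_add_mul_le_pow hm2 (n+1)
      push_cast at h
      have h1 : (1:ℝ) + (n+1) * (1/(n+1)) = 2 := by field_simp; norm_num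
      have h2 : ((1:ℝ) + 1/(n+1)) = (n+2)/(n+1) := by field_simp; ring
      rw [h1, h2, div_pow] at h
      have := (le_div_iff₀ (by positivity)).mp h
      nlinarith [pow_pos hpos (n+1)]
    calc ((n+1)! : ℝ) * 2^(n+1) = (n+1) * 2 * ((n ! : ℝ) * 2^n) := by
          push_cast [Nat.factorial_succ]; ring
      _ ≤ (n+1) * 2 * (n+1:ℝ)^n := by
          apply mul_le_mul_of_nonneg_left ih; positivity
      _ = 2 * (n+1:ℝ)^(n+1) := by ring
      _ ≤ (↑(n+1) + 1:ℝ)^(n+1) := by push_cast; convert hb using 2; ring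

noncomputable def gfun (n : ℕ) : ℝ := Real.log (n !) / n

lemma log_fact_le (n : ℕ) : Real.log (n !) ≤ n * Real.log ((n:ℝ)+1) - n * Real.log 2 := by
  have h1 : Real.log ((n ! : ℝ) * 2 ^ n) ≤ Real.log ((n+1:ℝ)^n) :=
    Real.log_le_log (by positivity) (fact_amgm n)
  rw [Real.log_mul (by positivity) (by positivity), Real.log_pow, Real.log_pow] at h1
  linarith

lemma conc (n : ℕ) (hn : 1 ≤ n) : gfun n + gfun (n+2) < 2 * gfun (n+1) := by
  have hx : (1:ℝ) ≤ (n:ℝ) := by exact_mod_cast hn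
  have hx0 : (0:ℝ) < n := by linarith
  have hfac1 : Real.log ((n+1)! ) = Real.log (n !) + Real.log ((n:ℝ)+1) := by
    rw [Nat.factorial_succ]
    push_cast
    rw [Real.log_mul (by positivity) (by positivity)]
    ring
  have hfac2 : Real.log ((n+2)! ) = Real.log (n !) + Real.log ((n:ℝ)+1) + Real.log ((n:ℝ)+2) := by
    rw [show n+2 = (n+1)+1 from rfl, Nat.factorial_succ]
    push_cast
    rw [Real.log_mul (by positivity) (by positivity), hfac1]
    rw [show (n:ℝ)+1+1 = (n:ℝ)+2 from by ring]; ring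
  set a := Real.log ((n:ℝ)+1) with ha
  set b := Real.log ((n:ℝ)+2) with hbdef
  set c := Real.log ((n !:ℕ) : ℝ) with hc
  set x : ℝ := (n:ℝ) with hxdef
  have hb1 : (x+1) * (b - a) ≤ 1 := by
    have h := Real.log_le_sub_one_of_pos (x := (x+2)/(x+1)) (by positivity)
    rw [Real.log_div (by positivity) (by positivity)] at h
    rw [← ha, ← hbdef] at h
    have he : (x+2)/(x+1) - 1 = 1/(x+1) := by field_simp; norm_num
    rw [he] at h
    calc (x+1)*(b-a) ≤ (x+1)*(1/(x+1)) := by nlinarith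
      _ = 1 := by field_simp
  have hcle : c ≤ x * a - x * Real.log 2 := log_fact_le n
  have hlog2 : (1:ℝ)/2 < Real.log 2 := by
    have := Real.log_two_gt_d9; linarith
  simp only [gfun]
  push_cast
  rw [hfac1, hfac2, ← hc, ← hxdef]
  have e1 : c / x + (c + a + b) / (x+2) = (c*(x+2) + x*(c+a+b)) / (x*(x+2)) := by
    field_simp
  have e2 : 2 * ((c + a) / (x+1)) = (2*(c+a)) / (x+1) := by ring
  rw [e1, e2, div_lt_div_iff₀ (by positivity) (by positivity)]
  nlinarith [mul_le_mul_of_nonneg_left hb1 hx0.le,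
    mul_le_mul_of_nonneg_left hcle (by norm_num : (0:ℝ) ≤ 2), hx0]

lemma dlt : ∀ k j : ℕ, 1 ≤ j → j < k →
    gfun (k+1) - gfun k < gfun (j+1) - gfun j := by
  intro k
  induction k with
  | zero => omega
  | succ k ih =>
    intro j hj hjk
    have hk1 : 1 ≤ k := by omega
    have h := conc k hk1
    rcases Nat.lt_or_ge j k with h2 | h2
    · have := ih j hj h2
      rw [show k + 1 + 1 = k + 2 from rfl]
      linarith
    · have : j = k := by omega
      subst this
      rw [show j + 1 + 1 = j + 2 from rfl]
      linarith

lemma step_lem (a b : ℕ) (ha : 1 ≤ a) (h : a < b) :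
    gfun a + gfun (b+1) < gfun (a+1) + gfun b := by
  have := dlt b a ha h
  linarith

lemma main_strict : ∀ d : ℕ, ∀ p q : ℕ, 1 ≤ p → q = p + d + 2 →
    gfun p + gfun q < gfun ((p+q)/2) + gfun ((p+q+1)/2) := by
  intro d
  induction d using Nat.strong_induction_on with
  | _ d ih =>
    intro p q hp hq
    subst hq
    have hstep : gfun p + gfun (p+d+2) < gfun (p+1) + gfun (p+d+1) := by
      have := step_lem p (p+d+1) hp (by omega)
      rwa [show p+d+1+1 = p+d+2 from rfl] at this
    rcases Nat.lt_or_ge d 2 with hd | hd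
    · interval_cases d
      · rw [show (p + (p+0+2))/2 = p+1 from by omega,
            show (p + (p+0+2)+1)/2 = p+1 from by omega]
        rw [show p+0+2 = p+2 from by omega] at hstep ⊢
        rw [show p+0+1 = p+1 from by omega] at hstep
        linarith
      · rw [show (p + (p+1+2))/2 = p+1 from by omega,
            show (p + (p+1+2)+1)/2 = p+2 from by omega]
        rw [show p+1+2 = p+3 from by omega] at hstep ⊢
        rw [show p+1+1 = p+2 from by omega] at hstep
        linarith
    · have hih := ih (d-2) (by omega) (p+1) (p+d+1) (by omega) (by omega)
      rw [show ((p+1) + (p+d+1))/2 = (p + (p+d+2))/2 from by omega,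
          show ((p+1) + (p+d+1)+1)/2 = (p + (p+d+2)+1)/2 from by omega] at hih
      linarith

lemma my_pair_eq_pair (a b c d : ℕ) :
    ({a, b} : Multiset ℕ) = {c, d} ↔ (a = c ∧ b = d) ∨ (a = d ∧ b = c) := by
  constructor
  · intro h
    simp only [Multiset.insert_eq_cons, Multiset.cons_eq_cons] at h
    rcases h with ⟨h1, h2⟩ | ⟨h1, cs, h2, h3⟩
    · left; exact ⟨h1, by simpa using h2⟩
    · have : cs = 0 := by
        have := congrArg Multiset.card h2
        simpa using this
      subst this
      simp at h2 h3
      right; constructor <;> omega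
  · rintro (⟨rfl, rfl⟩ | ⟨rfl, rfl⟩)
    · rfl
    · exact Multiset.pair_comm a b

lemma key2 (p q : ℕ) (hp : 1 ≤ p) (hpq : p ≤ q) :
    gfun p + gfun q ≤ gfun ((p+q)/2) + gfun ((p+q+1)/2) ∧
    (gfun p + gfun q = gfun ((p+q)/2) + gfun ((p+q+1)/2) ↔
      ({p, q} : Multiset ℕ) = {(p+q)/2, (p+q+1)/2}) := by
  rcases Nat.lt_or_ge q (p+2) with h2 | h2
  · have e1 : (p+q)/2 = p := by omega
    have e2 : (p+q+1)/2 = q := by omega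
    rw [e1, e2]
    exact ⟨le_rfl, by simp⟩
  · have hs := main_strict (q-p-2) p q hp (by omega)
    refine ⟨hs.le, ?_⟩
    rw [my_pair_eq_pair]
    constructor
    · intro h; exact absurd h hs.ne
    · rintro (⟨h1, h2⟩ | ⟨h1, h2⟩) <;> (exfalso; omega)

lemma Feq (n : ℕ) (_hn : 1 ≤ n) : (n ! : ℝ) ^ (1 / (n : ℝ)) = Real.exp (gfun n) := by
  rw [Real.rpow_def_of_pos (by positivity), mul_one_div]
  rfl

/-- For positive integers `p, q` one has
`(p!)^{1/p} · (q!)^{1/q} ≤ (⌊(p+q)/2⌋!)^{1/⌊(p+q)/2⌋} · (⌈(p+q)/2⌉!)^{1/⌈(p+q)/2⌉}`,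
with equality iff the multiset `{p, q}` equals `{⌊(p+q)/2⌋, ⌈(p+q)/2⌉}`. -/
theorem stmt_3 (p q : ℕ) (hp : 0 < p) (hq : 0 < q) :
    (p ! : ℝ) ^ (1 / (p : ℝ)) * (q ! : ℝ) ^ (1 / (q : ℝ)) ≤
      (((p + q) / 2)! : ℝ) ^ (1 / (((p + q) / 2 : ℕ) : ℝ)) *
        (((p + q + 1) / 2)! : ℝ) ^ (1 / (((p + q + 1) / 2 : ℕ) : ℝ)) ∧
    ((p ! : ℝ) ^ (1 / (p : ℝ)) * (q ! : ℝ) ^ (1 / (q : ℝ)) =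
      (((p + q) / 2)! : ℝ) ^ (1 / (((p + q) / 2 : ℕ) : ℝ)) *
        (((p + q + 1) / 2)! : ℝ) ^ (1 / (((p + q + 1) / 2 : ℕ) : ℝ)) ↔
      ({p, q} : Multiset ℕ) = {(p + q) / 2, (p + q + 1) / 2}) := by
  have hm : 1 ≤ (p + q) / 2 := by omega
  have hM : 1 ≤ (p + q + 1) / 2 := by omega
  rw [Feq p hp, Feq q hq, Feq _ hm, Feq _ hM, ← Real.exp_add, ← Real.exp_add,
    Real.exp_le_exp, Real.exp_eq_exp]
  rcases le_total p q with h | h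
  · exact key2 p q hp h
  · have k := key2 q p hq h
    rw [show q + p = p + q from Nat.add_comm q p] at k
    refine ⟨by linarith [k.1], ?_⟩
    rw [add_comm (gfun p) (gfun q), Multiset.pair_comm p q]
    exact k.2
end

section
/- Let k ≥ 2 be an integer and let p_1, …, p_k be positive integers with sum M = p_1 + ⋯ + p_k. Define β := M - k·⌊M/k⌋ and θ(k,M) := (⌊M/k⌋!)^{(k-β)/⌊M/k⌋} · (⌈M/k⌉!)^{β/⌈M/k⌉}. Then ∏_{i=1}^{k} (p_i!)^{1/p_i} ≤ θ(k,M), and equality holds if and only if |p_i - p_j| ≤ 1 for all i, j ∈ {1,…,k}. -/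
/-!
Write `G n = log (n!) / n`, so that the claim is `∑ G (p i) ≤ (k - β) G m + β G (m + 1)` with
`m = ⌊M/k⌋`. The increments of `G` are strictly decreasing on `n ≥ 1`, so the graph of `G` lies
strictly below the line through `(m, G m)` and `(m + 1, G (m + 1))` except at `m` and `m + 1`.
Summing this chord bound over the `p i` gives exactly `(k - β) G m + β G (m + 1)`, with equality
iff every `p i` is `m` or `m + 1`, i.e. iff the `p i` differ pairwise by at most one.
-/

open Nat Finset

def chord (g : ℕ → ℝ) (m n : ℕ) : ℝ := g m + ((n : ℝ) - m) * (g (m + 1) - g m)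

section Chord

variable {g : ℕ → ℝ}

theorem apply_lt_chord (hg : StrictAntiOn (fun n ↦ g (n + 1) - g n) (Set.Ici 1)) {m n : ℕ}
    (hm : 1 ≤ m) (hn : 1 ≤ n) (hnm : n ≠ m) (hnm' : n ≠ m + 1) : g n < chord g m n := by
  rcases lt_or_gt_of_ne hnm with hlt | hgt
  · have hsum : ((m - n : ℕ) : ℝ) * (g (m + 1) - g m) < g m - g n := by
      rw [← sum_Ico_sub g hlt.le, ← Nat.card_Ico, ← nsmul_eq_mul, ← sum_const]
      refine sum_lt_sum_of_nonempty (nonempty_Ico.2 hlt) fun j hj ↦ ?_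
      have hj := mem_Ico.1 hj
      exact hg (Set.mem_Ici.2 (hn.trans hj.1)) (Set.mem_Ici.2 hm) hj.2
    rw [Nat.cast_sub hlt.le] at hsum
    unfold chord
    linarith
  · have hlt : m + 1 < n := by omega
    have hsum : g n - g (m + 1) < ((n - (m + 1) : ℕ) : ℝ) * (g (m + 1) - g m) := by
      rw [← sum_Ico_sub g hlt.le, ← Nat.card_Ico, ← nsmul_eq_mul, ← sum_const]
      refine sum_lt_sum_of_nonempty (nonempty_Ico.2 hlt) fun j hj ↦ ?_
      have hj := mem_Ico.1 hj
      exact hg (Set.mem_Ici.2 hm) (Set.mem_Ici.2 (by omega)) (by omega)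
    rw [Nat.cast_sub hlt.le] at hsum
    unfold chord
    push_cast at hsum
    linarith

theorem apply_eq_chord_iff (hg : StrictAntiOn (fun n ↦ g (n + 1) - g n) (Set.Ici 1)) {m n : ℕ}
    (hm : 1 ≤ m) (hn : 1 ≤ n) : g n = chord g m n ↔ n = m ∨ n = m + 1 := by
  refine ⟨fun h ↦ ?_, ?_⟩
  · by_contra! h'
    exact (apply_lt_chord hg hm hn h'.1 h'.2).ne h
  · rintro (rfl | rfl) <;> simp [chord]

theorem apply_le_chord (hg : StrictAntiOn (fun n ↦ g (n + 1) - g n) (Set.Ici 1)) {m n : ℕ}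
    (hm : 1 ≤ m) (hn : 1 ≤ n) : g n ≤ chord g m n :=
  if h : n = m ∨ n = m + 1 then ((apply_eq_chord_iff hg hm hn).2 h).le
  else (apply_lt_chord hg hm hn (fun h' ↦ h (.inl h')) (fun h' ↦ h (.inr h'))).le

end Chord

theorem forall_le_add_one_iff_abs_sub_le_one {ι : Type*} {p : ι → ℕ} :
    (∀ i j, p i ≤ p j + 1) ↔ ∀ i j, |(p i : ℤ) - p j| ≤ 1 := by
  refine ⟨fun h i j ↦ abs_sub_le_iff.2 ⟨?_, ?_⟩, fun h i j ↦ ?_⟩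
  · have := h i j; omega
  · have := h j i; omega
  · have := abs_sub_le_iff.1 (h i j); omega

section Balanced

variable {ι : Type*} [Fintype ι]

theorem sum_chord_eq (g : ℕ → ℝ) {p : ι → ℕ} {m r : ℕ}
    (h : ∑ i, p i = Fintype.card ι * m + r) :
    ∑ i, chord g m (p i) = ((Fintype.card ι : ℝ) - r) * g m + r * g (m + 1) := by
  have h' : ∑ i, (p i : ℝ) = Fintype.card ι * m + r := mod_cast h
  simp only [chord, sum_add_distrib, ← sum_mul, sum_sub_distrib, sum_const, Finset.card_univ,
    nsmul_eq_mul, h']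
  ring

theorem one_le_sum_div_card {p : ι → ℕ} (hp : ∀ i, 1 ≤ p i) (i : ι) :
    1 ≤ (∑ i, p i) / Fintype.card ι := by
  refine (Nat.one_le_div_iff (Fintype.card_pos_iff.2 ⟨i⟩)).2 ?_
  simpa using sum_le_sum fun i (_ : i ∈ univ) ↦ hp i

theorem forall_eq_sum_div_card_or_succ_iff {p : ι → ℕ} :
    (∀ i, p i = (∑ i, p i) / Fintype.card ι ∨ p i = (∑ i, p i) / Fintype.card ι + 1) ↔
      ∀ i j, p i ≤ p j + 1 := by
  constructor
  · intro h i j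
    rcases h i with hi | hi <;> rcases h j with hj | hj <;> omega
  · intro h i
    have hupper : Fintype.card ι * p i ≤ ∑ j, p j + Fintype.card ι := by
      simpa [sum_add_distrib] using sum_le_sum fun j (_ : j ∈ univ) ↦ h i j
    have hlower : ∑ j, p j < Fintype.card ι * (p i + 1) := by
      simpa using sum_lt_sum (fun j (_ : j ∈ univ) ↦ h j i) ⟨i, mem_univ i, Nat.lt_succ_self _⟩
    have hcard : 0 < Fintype.card ι := Fintype.card_pos_iff.2 ⟨i⟩
    have hdiv_le : (∑ j, p j) / Fintype.card ι ≤ p i :=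
      Nat.lt_succ_iff.1 ((Nat.div_lt_iff_lt_mul hcard).2 (by rwa [mul_comm]))
    have hlt_div : p i < (∑ j, p j) / Fintype.card ι + 2 := by
      have := Nat.lt_mul_div_succ (∑ j, p j) hcard
      exact Nat.lt_of_mul_lt_mul_left (a := Fintype.card ι) (by linarith)
    omega

theorem sum_le_sum_chord_div_card {g : ℕ → ℝ}
    (hg : StrictAntiOn (fun n ↦ g (n + 1) - g n) (Set.Ici 1)) {p : ι → ℕ} (hp : ∀ i, 1 ≤ p i) :
    ∑ i, g (p i) ≤ ∑ i, chord g ((∑ i, p i) / Fintype.card ι) (p i) :=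
  sum_le_sum fun i _ ↦ apply_le_chord hg (one_le_sum_div_card hp i) (hp i)

theorem sum_eq_sum_chord_div_card_iff {g : ℕ → ℝ}
    (hg : StrictAntiOn (fun n ↦ g (n + 1) - g n) (Set.Ici 1)) {p : ι → ℕ} (hp : ∀ i, 1 ≤ p i) :
    ∑ i, g (p i) = ∑ i, chord g ((∑ i, p i) / Fintype.card ι) (p i) ↔
      ∀ i j, p i ≤ p j + 1 := by
  rw [sum_eq_sum_iff_of_le fun i _ ↦ apply_le_chord hg (one_le_sum_div_card hp i) (hp i),
    ← forall_eq_sum_div_card_or_succ_iff]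
  simp only [mem_univ, true_implies]
  exact forall_congr' fun i ↦ apply_eq_chord_iff hg (one_le_sum_div_card hp i) (hp i)

end Balanced

noncomputable def logFactorialRoot (n : ℕ) : ℝ := Real.log n ! / n

theorem factorial_rpow_div_eq_exp (n : ℕ) (a : ℝ) :
    (n ! : ℝ) ^ (a / n) = Real.exp (a * logFactorialRoot n) := by
  rw [Real.rpow_def_of_pos (by positivity), logFactorialRoot, mul_div_left_comm, mul_comm]

theorem log_factorial_eq_sum (n : ℕ) : Real.log n ! = ∑ j ∈ range n, Real.log (j + 1) := by
  rw [← prod_range_add_one_eq_factorial, Nat.cast_prod, Real.log_prod fun j _ ↦ by positivity]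
  push_cast
  rfl

theorem log_factorial_succ (n : ℕ) : Real.log (n + 1)! = Real.log (n + 1) + Real.log n ! := by
  rw [factorial_succ, Nat.cast_mul, Real.log_mul (by positivity) (by positivity)]
  push_cast
  rfl

theorem half_lt_mul_log_succ_sub_log_factorial {n : ℕ} (hn : n ≠ 0) :
    (n : ℝ) / 2 < n * Real.log (n + 1) - Real.log n ! := by
  have hgauss : ∑ j ∈ range n, ((j : ℝ) + 1) = n * (n + 1) / 2 := by
    have h := sum_range_id_mul_two (n + 1)
    rw [sum_range_succ'] at h
    have h' : (∑ j ∈ range n, ((j + 1 : ℕ) : ℝ)) * 2 = (n + 1 : ℕ) * n := by exact_mod_cast h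
    push_cast at h'
    linarith
  have hterm (j : ℕ) (hj : j ∈ range n) :
      1 - ((j : ℝ) + 1) / (n + 1) < Real.log (n + 1) - Real.log (j + 1) := by
    have hjn : (j : ℝ) + 1 < n + 1 := by simpa using mem_range.1 hj
    have := Real.log_lt_sub_one_of_pos (x := ((j : ℝ) + 1) / (n + 1)) (by positivity)
      ((div_lt_one (by positivity)).2 hjn).ne
    rw [Real.log_div (by positivity) (by positivity)] at this
    linarith
  calc (n : ℝ) / 2 = ∑ j ∈ range n, (1 - ((j : ℝ) + 1) / (n + 1)) := by
        rw [sum_sub_distrib, sum_const, card_range, nsmul_eq_mul, mul_one, ← sum_div, hgauss]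
        field_simp
        ring
    _ < ∑ j ∈ range n, (Real.log (n + 1) - Real.log (j + 1)) :=
        sum_lt_sum_of_nonempty (nonempty_range_iff.2 hn) hterm
    _ = n * Real.log (n + 1) - Real.log n ! := by
        simp [sum_sub_distrib, log_factorial_eq_sum]

theorem mul_log_succ_div_le_one {x : ℝ} (hx : 0 < x) : x * Real.log ((x + 1) / x) ≤ 1 :=
  calc x * Real.log ((x + 1) / x) ≤ x * ((x + 1) / x - 1) := by
        gcongr
        exact Real.log_le_sub_one_of_pos (by positivity)
    _ = 1 := by field_simp; ring

theorem logFactorialRoot_succ_sub {n : ℕ} (hn : n ≠ 0) :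
    logFactorialRoot (n + 1) - logFactorialRoot n =
      (n * Real.log (n + 1) - Real.log n !) / (n * (n + 1)) := by
  simp only [logFactorialRoot, log_factorial_succ]
  push_cast
  field_simp
  ring

theorem strictAntiOn_logFactorialRoot_succ_sub :
    StrictAntiOn (fun n ↦ logFactorialRoot (n + 1) - logFactorialRoot n) (Set.Ici 1) := by
  refine strictAntiOn_Ici_of_lt_pred fun m hm ↦ ?_
  obtain ⟨n, rfl⟩ : ∃ n, m = n + 1 := ⟨m - 1, by omega⟩
  have hn : n ≠ 0 := by omega
  set A := (n : ℝ) * Real.log (n + 1) - Real.log n !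
  set δ := Real.log ((n : ℝ) + 1 + 1) - Real.log (n + 1) with hδ
  have hA : (n : ℝ) / 2 < A := half_lt_mul_log_succ_sub_log_factorial hn
  have hδ_le : ((n : ℝ) + 1) * δ ≤ 1 := by
    rw [hδ, ← Real.log_div (by positivity) (by positivity)]
    exact mul_log_succ_div_le_one (by positivity)
  -- The increment at `n` is `A / (n (n + 1))` and passing to `n + 1` adds `(n + 1) δ` to `A`,
  -- so the claim reduces to `n (n + 1) δ < 2 A`.
  have key : (n : ℝ) * ((n + 1) * δ) < 2 * A := by
    linarith [mul_le_mul_of_nonneg_left hδ_le (Nat.cast_nonneg (α := ℝ) n)]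
  simp only [Order.pred_eq_sub_one, Nat.add_sub_cancel]
  rw [logFactorialRoot_succ_sub hn, logFactorialRoot_succ_sub (Nat.succ_ne_zero n),
    log_factorial_succ, div_lt_div_iff₀ (by positivity) (by positivity)]
  push_cast
  rw [show ((n : ℝ) + 1) * Real.log (n + 1 + 1) - (Real.log (n + 1) + Real.log n !) =
      A + (n + 1) * δ by ring]
  nlinarith

theorem add_sub_one_div_eq_div_add_one {M k : ℕ} (hk : 0 < k) (h : M % k ≠ 0) :
    (M + k - 1) / k = M / k + 1 := by
  have hdiv := Nat.div_add_mod M k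
  have hmod := Nat.mod_lt M hk
  refine Nat.div_eq_of_lt_le ?_ ?_ <;>
  · generalize M / k = q at hdiv
    generalize M % k = r at hdiv h hmod
    subst hdiv
    simp only [add_mul, one_mul, mul_comm q k]
    omega

theorem stmt_4_general (k : ℕ) (p : Fin k → ℕ) (hp : ∀ i, 0 < p i)
    (M β : ℕ) (hM : M = ∑ i, p i) (hβ : β = M - k * (M / k)) :
    (∏ i, ((p i)! : ℝ) ^ (1 / (p i : ℝ))) ≤
      ((M / k)! : ℝ) ^ (((k : ℝ) - (β : ℝ)) / ((M / k : ℕ) : ℝ)) *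
        (((M + k - 1) / k)! : ℝ) ^ ((β : ℝ) / (((M + k - 1) / k : ℕ) : ℝ)) ∧
    ((∏ i, ((p i)! : ℝ) ^ (1 / (p i : ℝ))) =
      ((M / k)! : ℝ) ^ (((k : ℝ) - (β : ℝ)) / ((M / k : ℕ) : ℝ)) *
        (((M + k - 1) / k)! : ℝ) ^ ((β : ℝ) / (((M + k - 1) / k : ℕ) : ℝ)) ↔
      ∀ i j, |(p i : ℤ) - (p j : ℤ)| ≤ 1) := by
  have hβ_mod : β = M % k := hβ.trans Nat.mod_eq_sub_mul_div.symm
  have hlhs : ∏ i, ((p i)! : ℝ) ^ (1 / (p i : ℝ)) = Real.exp (∑ i, logFactorialRoot (p i)) := by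
    simp only [Real.exp_sum, factorial_rpow_div_eq_exp, one_mul]
  have hceil : β * logFactorialRoot ((M + k - 1) / k) = β * logFactorialRoot (M / k + 1) := by
    rcases eq_or_ne β 0 with h0 | h0
    · simp [h0]
    have hk : 0 < k := Nat.pos_of_ne_zero fun hk ↦ by subst hk; simp_all
    rw [add_sub_one_div_eq_div_add_one hk (hβ_mod ▸ h0)]
  have hrhs : ((M / k)! : ℝ) ^ (((k : ℝ) - (β : ℝ)) / ((M / k : ℕ) : ℝ)) *
      (((M + k - 1) / k)! : ℝ) ^ ((β : ℝ) / (((M + k - 1) / k : ℕ) : ℝ)) =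
      Real.exp (∑ i, chord logFactorialRoot ((∑ i, p i) / Fintype.card (Fin k)) (p i)) := by
    rw [factorial_rpow_div_eq_exp, factorial_rpow_div_eq_exp, ← Real.exp_add, hceil,
      sum_chord_eq _ (r := β) (by simp [← hM, hβ_mod, Nat.div_add_mod]), Fintype.card_fin, hM]
  rw [hlhs, hrhs, Real.exp_le_exp, Real.exp_eq_exp,
    sum_eq_sum_chord_div_card_iff strictAntiOn_logFactorialRoot_succ_sub hp,
    forall_le_add_one_iff_abs_sub_le_one]
  exact ⟨sum_le_sum_chord_div_card strictAntiOn_logFactorialRoot_succ_sub hp, Iff.rfl⟩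

/-- Let `k ≥ 2` and let `p 1, …, p k` be positive integers with sum `M`.
With `β = M - k⌊M/k⌋` and `θ(k,M) = (⌊M/k⌋!)^{(k-β)/⌊M/k⌋} · (⌈M/k⌉!)^{β/⌈M/k⌉}`,
one has `∏ i, (p i !)^{1/p i} ≤ θ(k,M)`, with equality iff `|p i - p j| ≤ 1` for all `i, j`. -/
theorem stmt_4 (k : ℕ) (hk : 2 ≤ k) (p : Fin k → ℕ) (hp : ∀ i, 0 < p i)
    (M β : ℕ) (hM : M = ∑ i, p i) (hβ : β = M - k * (M / k)) :
    (∏ i, ((p i)! : ℝ) ^ (1 / (p i : ℝ))) ≤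
      ((M / k)! : ℝ) ^ (((k : ℝ) - (β : ℝ)) / ((M / k : ℕ) : ℝ)) *
        (((M + k - 1) / k)! : ℝ) ^ ((β : ℝ) / (((M + k - 1) / k : ℕ) : ℝ)) ∧
    ((∏ i, ((p i)! : ℝ) ^ (1 / (p i : ℝ))) =
      ((M / k)! : ℝ) ^ (((k : ℝ) - (β : ℝ)) / ((M / k : ℕ) : ℝ)) *
        (((M + k - 1) / k)! : ℝ) ^ ((β : ℝ) / (((M + k - 1) / k : ℕ) : ℝ)) ↔
      ∀ i j, |(p i : ℤ) - (p j : ℤ)| ≤ 1) :=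
  stmt_4_general k p hp M β hM hβ
end

section
/- Let G be a finite simple graph with an even number 2n of vertices and m edges. Then there exists a balanced finite simple graph G_0 with 2n vertices and m edges such that the number of perfect matchings of G is at most the number of perfect matchings of G_0. -/
open Nat

/-- The degree of a vertex, as the cardinality of its neighbor set. -/
noncomputable def ndeg {V : Type*} (G : SimpleGraph V) (v : V) : ℕ :=
  (G.neighborSet v).ncard

/-- The number of perfect matchings of a simple graph. -/
noncomputable def perfmat {V : Type*} (G : SimpleGraph V) : ℕ :=
  {M : G.Subgraph | M.IsPerfectMatching}.ncard

/-- A graph is unbalanced if there are vertices `u, v` with `deg v ≥ deg u + 2` such that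
every neighbor of `u` different from `v` is a neighbor of `v`; it is balanced otherwise. -/
def BalancedGraph {V : Type*} (G : SimpleGraph V) : Prop :=
  ¬ ∃ u v : V, ndeg G u + 2 ≤ ndeg G v ∧ ∀ w, G.Adj u w → w ≠ v → G.Adj v w

/-! If `u, v` witness that `G` is unbalanced, then `v` has a neighbour `w ≠ u` that is not a
neighbour of `u`, and we move the edge `vw` to `uw`. This keeps the number of edges and strictly
decreases `∑ deg²`. Perfect matchings inject into those of the new graph: a matching avoiding `vw`
survives, and a matching containing `vw` and `ux` is relabelled by the transposition `(u v)`,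
which replaces these edges by `uw` and `vx`; `vx` is an edge because `N(u) \ {v} ⊆ N(v)`.
Iterating the move therefore ends at a balanced graph. -/

theorem Finset.sum_sq_lt_sum_sq_of_transfer {ι : Type*} [Fintype ι] {f g : ι → ℕ} {i j : ι}
    (hij : i ≠ j) (hi : g i = f i + 1) (hj : g j + 1 = f j) (hlt : f i + 2 ≤ f j)
    (hrest : ∀ k, k ≠ i → k ≠ j → g k = f k) : ∑ k, g k ^ 2 < ∑ k, f k ^ 2 := by
  have hdiff : ∑ k, ((f k : ℤ) ^ 2 - g k ^ 2) = (f i ^ 2 - g i ^ 2) + (f j ^ 2 - g j ^ 2) :=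
    Fintype.sum_eq_add i j hij fun k hk ↦ by simp [hrest k hk.1 hk.2]
  rw [Finset.sum_sub_distrib] at hdiff
  zify at hi hj hlt ⊢
  nlinarith

namespace SimpleGraph

variable {V : Type*}

/-- Perfect matchings of `G`, seen as spanning subgraphs of type `SimpleGraph V`, so that the
matchings of different graphs on `V` can be compared directly. -/
def perfectMatchingGraphs (G : SimpleGraph V) : Set (SimpleGraph V) :=
  {H | H ≤ G ∧ ∀ a, ∃! b, H.Adj a b}

theorem perfmat_eq_ncard_perfectMatchingGraphs (G : SimpleGraph V) :
    perfmat G = (perfectMatchingGraphs G).ncard := by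
  refine Set.ncard_congr (fun M _ ↦ M.spanningCoe) (fun M hM ↦ ?_) (fun M₁ M₂ hM₁ hM₂ h ↦ ?_)
    (fun H ⟨hle, hH⟩ ↦ ⟨G.toSubgraph H hle, ?_, rfl⟩)
  · exact ⟨M.spanningCoe_le, Subgraph.isPerfectMatching_iff.1 hM⟩
  · exact Subgraph.ext (hM₁.2.verts_eq_univ.trans hM₂.2.verts_eq_univ.symm)
      (Subgraph.spanningCoe_inj.1 h)
  · exact Subgraph.isPerfectMatching_iff.2 hH

theorem comap_equiv_mem_perfectMatchingGraphs {G G' H : SimpleGraph V} (σ : V ≃ V)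
    (hH : H ∈ perfectMatchingGraphs G) (hle : H.comap σ ≤ G') :
    H.comap σ ∈ perfectMatchingGraphs G' :=
  ⟨hle, fun a ↦ σ.existsUnique_congr_right.2 (hH.2 (σ a))⟩

def moveEdge (G : SimpleGraph V) (u v w : V) : SimpleGraph V :=
  G.deleteEdges {s(v, w)} ⊔ edge u w

variable {G : SimpleGraph V} {u v w : V}

theorem moveEdge_adj {a b : V} :
    (G.moveEdge u v w).Adj a b ↔
      G.Adj a b ∧ s(a, b) ≠ s(v, w) ∨ s(u, w) = s(a, b) ∧ a ≠ b := by
  simp [moveEdge, adj_edge]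

theorem edgeSet_moveEdge (huw : u ≠ w) :
    (G.moveEdge u v w).edgeSet = G.edgeSet \ {s(v, w)} ∪ {s(u, w)} := by
  rw [moveEdge, edgeSet_sup, edgeSet_deleteEdges, edgeSet_edge_of_ne huw]

theorem ncard_edgeSet_moveEdge [Finite V] (hvw : G.Adj v w) (hnadj : ¬ G.Adj u w) (huw : u ≠ w) :
    (G.moveEdge u v w).edgeSet.ncard = G.edgeSet.ncard := by
  rw [edgeSet_moveEdge huw,
    Set.ncard_union_eq (Set.disjoint_singleton_right.2 fun h ↦ hnadj h.1) (Set.toFinite _)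
      (Set.toFinite _), Set.ncard_singleton,
    Set.ncard_sdiff_singleton_add_one (G.mem_edgeSet.2 hvw) (Set.toFinite _)]

theorem neighborSet_moveEdge_left (hnadj : ¬ G.Adj u w) (huw : u ≠ w) (huv : u ≠ v) :
    (G.moveEdge u v w).neighborSet u = insert w (G.neighborSet u) := by
  ext b
  simp only [mem_neighborSet, moveEdge_adj, Set.mem_insert_iff]
  aesop

theorem neighborSet_moveEdge_middle (hvw : G.Adj v w) (huv : u ≠ v) :
    (G.moveEdge u v w).neighborSet v = G.neighborSet v \ {w} := by
  ext b
  simp only [mem_neighborSet, moveEdge_adj, Set.mem_sdiff, Set.mem_singleton_iff]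
  aesop

theorem neighborSet_moveEdge_right (huw : u ≠ w) :
    (G.moveEdge u v w).neighborSet w = insert u (G.neighborSet w \ {v}) := by
  ext b
  simp only [mem_neighborSet, moveEdge_adj, Set.mem_insert_iff, Set.mem_sdiff,
    Set.mem_singleton_iff]
  aesop

theorem neighborSet_moveEdge_of_ne {a : V} (hau : a ≠ u) (hav : a ≠ v) (haw : a ≠ w) :
    (G.moveEdge u v w).neighborSet a = G.neighborSet a := by
  ext b
  simp only [mem_neighborSet, moveEdge_adj]
  aesop

theorem ndeg_moveEdge_left [Finite V] (hnadj : ¬ G.Adj u w) (huw : u ≠ w) (huv : u ≠ v) :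
    ndeg (G.moveEdge u v w) u = ndeg G u + 1 := by
  rw [ndeg, neighborSet_moveEdge_left hnadj huw huv,
    Set.ncard_insert_of_notMem (mt (G.mem_neighborSet u w).1 hnadj) (Set.toFinite _), ndeg]

theorem ndeg_moveEdge_middle [Finite V] (hvw : G.Adj v w) (huv : u ≠ v) :
    ndeg (G.moveEdge u v w) v + 1 = ndeg G v := by
  rw [ndeg, neighborSet_moveEdge_middle hvw huv,
    Set.ncard_sdiff_singleton_add_one ((G.mem_neighborSet v w).2 hvw) (Set.toFinite _), ndeg]

theorem ndeg_moveEdge_of_ne [Finite V] (hvw : G.Adj v w) (hnadj : ¬ G.Adj u w) (huw : u ≠ w)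
    {a : V} (hau : a ≠ u) (hav : a ≠ v) : ndeg (G.moveEdge u v w) a = ndeg G a := by
  obtain rfl | haw := eq_or_ne a w
  · rw [ndeg, neighborSet_moveEdge_right huw, Set.ncard_insert_of_notMem
      (fun h ↦ hnadj h.1.symm) (Set.toFinite _),
      Set.ncard_sdiff_singleton_add_one ((G.mem_neighborSet _ _).2 hvw.symm) (Set.toFinite _),
      ndeg]
  · rw [ndeg, neighborSet_moveEdge_of_ne hau hav haw, ndeg]

theorem le_moveEdge_of_not_adj {H : SimpleGraph V} (hle : H ≤ G) (hvw : ¬ H.Adj v w) :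
    H ≤ G.moveEdge u v w := fun a b hab ↦ moveEdge_adj.2 <| .inl ⟨hle hab, fun he ↦ hvw <| by
  rcases Sym2.eq_iff.1 he with ⟨rfl, rfl⟩ | ⟨rfl, rfl⟩
  exacts [hab, hab.symm]⟩

theorem comap_swap_le_moveEdge [DecidableEq V] {H : SimpleGraph V}
    (hH : H ∈ G.perfectMatchingGraphs) (hvw : H.Adj v w) (huv : u ≠ v) (huw : u ≠ w)
    (hsub : ∀ y, G.Adj u y → y ≠ v → G.Adj v y) :
    H.comap (Equiv.swap u v) ≤ G.moveEdge u v w := by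
  have partner_eq {a b c : V} (hb : H.Adj a b) (hc : H.Adj a c) : b = c := (hH.2 a).unique hb hc
  obtain ⟨x, hux, -⟩ := hH.2 u
  have hxv : x ≠ v := by rintro rfl; exact huw (partner_eq hux.symm hvw)
  have hxw : x ≠ w := by rintro rfl; exact huv (partner_eq hux.symm hvw.symm)
  have hwv : w ≠ v := hvw.ne.symm
  have hσw : Equiv.swap u v w = w := Equiv.swap_apply_of_ne_of_ne huw.symm hwv
  have hσx : Equiv.swap u v x = x := Equiv.swap_apply_of_ne_of_ne hux.ne.symm hxv
  have moved {a b : V} (hab : H.Adj a b) (ha : a = u ∨ a = v) :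
      (G.moveEdge u v w).Adj (Equiv.swap u v a) (Equiv.swap u v b) := by
    rcases ha with rfl | rfl
    · obtain rfl := partner_eq hab hux
      rw [Equiv.swap_apply_left, hσx]
      exact moveEdge_adj.2 <| .inl ⟨hsub b (hH.1 hab) hxv, by simp [hxw, hwv.symm]⟩
    · obtain rfl := partner_eq hab hvw
      rw [Equiv.swap_apply_right, hσw]
      exact moveEdge_adj.2 <| .inr ⟨rfl, huw⟩
  suffices ∀ a b, H.Adj a b → (G.moveEdge u v w).Adj (Equiv.swap u v a) (Equiv.swap u v b) by
    intro a b hab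
    simpa using this _ _ hab
  intro a b hab
  by_cases ha : a = u ∨ a = v
  · exact moved hab ha
  by_cases hb : b = u ∨ b = v
  · exact (moved hab.symm hb).symm
  rw [not_or] at ha hb
  rw [Equiv.swap_apply_of_ne_of_ne ha.1 ha.2, Equiv.swap_apply_of_ne_of_ne hb.1 hb.2]
  exact moveEdge_adj.2 <| .inl ⟨hH.1 hab, by simp [ha.2, hb.2]⟩

theorem perfmat_le_perfmat_moveEdge [Finite V] (hnadj : ¬ G.Adj u w) (huv : u ≠ v)
    (huw : u ≠ w) (hsub : ∀ y, G.Adj u y → y ≠ v → G.Adj v y) :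
    perfmat G ≤ perfmat (G.moveEdge u v w) := by
  classical
  rw [perfmat_eq_ncard_perfectMatchingGraphs, perfmat_eq_ncard_perfectMatchingGraphs]
  set σ := Equiv.swap u v
  have hσu {H : SimpleGraph V} (h : H.Adj v w) : (H.comap σ).Adj u w := by
    simpa [σ, Equiv.swap_apply_of_ne_of_ne huw.symm h.ne.symm] using h
  refine Set.ncard_le_ncard_of_injOn (fun H ↦ if H.Adj v w then H.comap σ else H)
    (fun H hH ↦ ?_) (fun H₁ hH₁ H₂ hH₂ heq ↦ ?_) (Set.toFinite _)
  · split_ifs with hvw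
    · exact comap_equiv_mem_perfectMatchingGraphs σ hH
        (comap_swap_le_moveEdge hH hvw huv huw hsub)
    · exact ⟨le_moveEdge_of_not_adj hH.1 hvw, hH.2⟩
  · dsimp only at heq
    split_ifs at heq with h₁ h₂ h₂
    · ext a b
      simpa [σ] using congrArg (fun H ↦ H.Adj (σ a) (σ b)) heq
    · exact absurd (hH₂.1 (heq ▸ hσu h₁)) hnadj
    · exact absurd (hH₁.1 (heq ▸ hσu h₂)) hnadj
    · exact heq

theorem sum_sq_ndeg_moveEdge_lt [Fintype V] (hvw : G.Adj v w) (hnadj : ¬ G.Adj u w)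
    (huv : u ≠ v) (huw : u ≠ w) (hdeg : ndeg G u + 2 ≤ ndeg G v) :
    ∑ a, ndeg (G.moveEdge u v w) a ^ 2 < ∑ a, ndeg G a ^ 2 :=
  Finset.sum_sq_lt_sum_sq_of_transfer huv (ndeg_moveEdge_left hnadj huw huv)
    (ndeg_moveEdge_middle hvw huv) hdeg fun _ hau hav ↦ ndeg_moveEdge_of_ne hvw hnadj huw hau hav

theorem exists_adj_not_adj_of_ndeg_add_two_le [Finite V] (hdeg : ndeg G u + 2 ≤ ndeg G v) :
    ∃ w, G.Adj v w ∧ u ≠ w ∧ ¬ G.Adj u w := by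
  by_contra! h
  have hsub : G.neighborSet v ⊆ insert u (G.neighborSet u) := fun w hw ↦ by
    by_cases huw : u = w
    · exact huw ▸ Set.mem_insert u _
    · exact Set.mem_insert_of_mem u (h w hw huw)
  have := (Set.ncard_le_ncard hsub (Set.toFinite _)).trans (Set.ncard_insert_le u _)
  rw [ndeg, ndeg] at hdeg
  omega

theorem exists_balancedGraph_perfmat_le [Fintype V] (G : SimpleGraph V) :
    ∃ G₀ : SimpleGraph V, BalancedGraph G₀ ∧ G₀.edgeSet.ncard = G.edgeSet.ncard ∧
      perfmat G ≤ perfmat G₀ := by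
  induction h : ∑ a, ndeg G a ^ 2 using Nat.strong_induction_on generalizing G with
  | _ N ih =>
  by_cases hG : BalancedGraph G
  · exact ⟨G, hG, rfl, le_rfl⟩
  obtain ⟨u, v, hdeg, hsub⟩ := not_not.1 hG
  have huv : u ≠ v := by rintro rfl; omega
  obtain ⟨w, hvw, huw, hnadj⟩ := exists_adj_not_adj_of_ndeg_add_two_le hdeg
  obtain ⟨G₀, hG₀, hE, hP⟩ :=
    ih _ (h ▸ sum_sq_ndeg_moveEdge_lt hvw hnadj huv huw hdeg) (G.moveEdge u v w) rfl
  exact ⟨G₀, hG₀, hE.trans (ncard_edgeSet_moveEdge hvw hnadj huw),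
    (perfmat_le_perfmat_moveEdge hnadj huv huw hsub).trans hP⟩

end SimpleGraph

theorem stmt_8_general {V : Type*} [Fintype V] (G : SimpleGraph V) (m : ℕ)
    (hE : G.edgeSet.ncard = m) :
    ∃ G0 : SimpleGraph V, BalancedGraph G0 ∧ G0.edgeSet.ncard = m ∧ perfmat G ≤ perfmat G0 :=
  hE ▸ G.exists_balancedGraph_perfmat_le

/-- For every simple graph `G` with `2n` vertices and `m` edges there is a balanced simple
graph `G₀` with `2n` vertices and `m` edges having at least as many perfect matchings. -/
theorem stmt_8 {V : Type*} [Fintype V] (G : SimpleGraph V) (n m : ℕ)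
    (hV : Fintype.card V = 2 * n) (hE : G.edgeSet.ncard = m) :
    ∃ G0 : SimpleGraph V, BalancedGraph G0 ∧ G0.edgeSet.ncard = m ∧ perfmat G ≤ perfmat G0 :=
  stmt_8_general G m hE
end

section
/- Let C be an n×n matrix over a commutative ring, and let S be the 2n×2n block matrix S = [[0, C],[Cᵀ, 0]]. Then per(S) = (per(C))². -/
open Nat Matrix

/-- The permanent of a square matrix over a commutative ring. -/
def perm {ι : Type*} [Fintype ι] [DecidableEq ι] {R : Type*} [CommRing R]
    (M : Matrix ι ι R) : R :=
  ∑ σ : Equiv.Perm ι, ∏ i, M i (σ i)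

lemma perm_transpose {n : ℕ} {R : Type*} [CommRing R] (M : Matrix (Fin n) (Fin n) R) :
    perm Mᵀ = perm M := by
  unfold perm
  refine Fintype.sum_bijective (·⁻¹) (Equiv.inv _).bijective _ _ fun σ => ?_
  have := Equiv.prod_comp σ (fun i => M i (σ⁻¹ i))
  rw [← this]
  simp [Matrix.transpose_apply]

lemma perm_fromBlocks_zero {n : ℕ} {R : Type*} [CommRing R]
    (A B : Matrix (Fin n) (Fin n) R) :
    perm (Matrix.fromBlocks 0 A B 0) = perm A * perm B := by
  classical
  set S := Matrix.fromBlocks 0 A B 0 with hS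
  unfold perm
  rw [Finset.sum_mul_sum, ← Finset.sum_product']
  symm
  have key : ∀ p : Equiv.Perm (Fin n) × Equiv.Perm (Fin n),
      (∏ i, A i (p.1 i)) * (∏ i, B i (p.2 i)) =
      ∏ i, S i (((Equiv.sumCongr p.1 p.2).trans (Equiv.sumComm (Fin n) (Fin n))) i) := by
    intro p
    rw [Fintype.prod_sum_type]
    simp [hS]
  refine Finset.sum_bij_ne_zero
    (fun p _ _ => (Equiv.sumCongr p.1 p.2).trans (Equiv.sumComm (Fin n) (Fin n)))
    (fun _ _ _ => Finset.mem_univ _) ?_ ?_ ?_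
  · intro p _ _ q _ _ h
    have h1 : ∀ i, Sum.inr (p.1 i) = (Sum.inr (q.1 i) : Fin n ⊕ Fin n) := by
      intro i
      have := congrFun (congrArg (fun e => (e : Equiv.Perm (Fin n ⊕ Fin n)) ∘ Sum.inl) h) i
      simpa using this
    have h2 : ∀ i, Sum.inl (p.2 i) = (Sum.inl (q.2 i) : Fin n ⊕ Fin n) := by
      intro i
      have := congrFun (congrArg (fun e => (e : Equiv.Perm (Fin n ⊕ Fin n)) ∘ Sum.inr) h) i
      simpa using this
    have : p.1 = q.1 := Equiv.ext fun i => Sum.inr_injective (h1 i)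
    have : p.2 = q.2 := Equiv.ext fun i => Sum.inl_injective (h2 i)
    exact Prod.ext ‹p.1 = q.1› ‹p.2 = q.2›
  · intro σ _ hσ
    have hfac : ∀ x : Fin n ⊕ Fin n, S x (σ x) ≠ 0 := by
      intro x hx
      exact hσ (Finset.prod_eq_zero (Finset.mem_univ x) hx)
    have h1 : ∀ i, (σ (Sum.inl i)).isRight := by
      intro i
      cases hc : σ (Sum.inl i) with
      | inl j => exact absurd (by simp [hS, hc]) (hfac (Sum.inl i))
      | inr j => simp
    have h2 : ∀ i, (σ (Sum.inr i)).isLeft := by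
      intro i
      cases hc : σ (Sum.inr i) with
      | inl j => simp
      | inr j => exact absurd (by simp [hS, hc]) (hfac (Sum.inr i))
    set g1 : Fin n → Fin n := fun i => (σ (Sum.inl i)).getRight (h1 i) with hg1
    set g2 : Fin n → Fin n := fun i => (σ (Sum.inr i)).getLeft (h2 i) with hg2
    have hg1' : ∀ i, Sum.inr (g1 i) = σ (Sum.inl i) := fun i => Sum.inr_getRight _ (h1 i)
    have hg2' : ∀ i, Sum.inl (g2 i) = σ (Sum.inr i) := fun i => Sum.inl_getLeft _ (h2 i)
    have inj1 : Function.Injective g1 := by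
      intro a b h
      have : σ (Sum.inl a) = σ (Sum.inl b) := by rw [← hg1', ← hg1', h]
      exact Sum.inl_injective (σ.injective this)
    have inj2 : Function.Injective g2 := by
      intro a b h
      have : σ (Sum.inr a) = σ (Sum.inr b) := by rw [← hg2', ← hg2', h]
      exact Sum.inr_injective (σ.injective this)
    set e1 := Equiv.ofBijective g1 (Finite.injective_iff_bijective.mp inj1)
    set e2 := Equiv.ofBijective g2 (Finite.injective_iff_bijective.mp inj2)
    have heq : ((Equiv.sumCongr e1 e2).trans (Equiv.sumComm (Fin n) (Fin n))) = σ := by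
      ext x
      cases x with
      | inl i => simpa [e1, Equiv.ofBijective] using hg1' i
      | inr i => simpa [e2, Equiv.ofBijective] using hg2' i
    refine ⟨(e1, e2), Finset.mem_univ _, ?_, heq⟩
    rw [key (e1, e2)]
    simpa [heq] using hσ
  · intro p _ _
    exact key p

/-- For an `n×n` matrix `C` over a commutative ring, the permanent of the block matrix
`S = [[0, C], [Cᵀ, 0]]` equals `(per C)²`. -/
theorem stmt_10 {n : ℕ} {R : Type*} [CommRing R] (C : Matrix (Fin n) (Fin n) R) :
    perm (Matrix.fromBlocks 0 C Cᵀ 0) = (perm C) ^ 2 := by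
  rw [perm_fromBlocks_zero, perm_transpose, sq]
end

section
/- For every integer n ≥ 1, there exists a finite simple graph G with 6 + 2n vertices and 6 + n edges that is NOT almost regular and satisfies perfmat H ≤ perfmat G for every finite simple graph H with 6 + 2n vertices and 6 + n edges. In other words, the graphs maximizing the number of perfect matchings among graphs with 6+2n vertices and 6+n edges are not all almost regular. -/
open Nat

/-!
Encode a perfect matching by its partner map, a fixed-point-free involution `f`, with edges
`{v, f v}`. For a second such involution `g ≠ f`, the edges of `g` outside `f` cover exactly the
vertices where `g` and `f` differ, so there are at least two of them. Given three distinct perfect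
matchings `f, g, h`, the edges of `g` and `h` outside `f` number at least four: otherwise one of
them, say `g`, has a single edge `{x, g x}` that `h` lacks, `h` agrees with `g` at the `f`-partners
of `x` and `g x`, and this produces four such edges after all. Hence a graph on `2m` vertices with
at most `m + 3` edges has at most two perfect matchings, and `K₄` minus an edge together with a
perfect matching of the remaining vertices has two, with vertex degrees `3` and `1`.
-/

open Function

section Matchings

variable {V : Type*} {f g h : V → V}

def matchingEdges (f : V → V) : Set (Sym2 V) := Set.range fun v => s(v, f v)

lemma mk_mem_matchingEdges (f : V → V) (v : V) : s(v, f v) ∈ matchingEdges f := ⟨v, rfl⟩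

lemma Function.Involutive.mk_mem_matchingEdges_iff (hf : Involutive f) {x y : V} :
    s(x, y) ∈ matchingEdges f ↔ f x = y := by
  refine ⟨?_, fun hxy => hxy ▸ mk_mem_matchingEdges f x⟩
  rintro ⟨v, hv⟩
  rcases Sym2.eq_iff.mp hv with ⟨rfl, rfl⟩ | ⟨rfl, rfl⟩
  · rfl
  · exact hf v

lemma Function.Involutive.mk_mem_matchingEdges_sdiff_iff (hf : Involutive f) (v : V) :
    s(v, g v) ∈ matchingEdges g \ matchingEdges f ↔ g v ≠ f v := by
  simp [mk_mem_matchingEdges, hf.mk_mem_matchingEdges_iff, eq_comm]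

lemma Function.Involutive.matchingEdges_sdiff_eq_image (hf : Involutive f) :
    matchingEdges g \ matchingEdges f = (fun v => s(v, g v)) '' {v | g v ≠ f v} := by
  ext e
  constructor
  · rintro ⟨⟨v, rfl⟩, hv⟩
    exact ⟨v, (hf.mk_mem_matchingEdges_sdiff_iff v).mp ⟨mk_mem_matchingEdges g v, hv⟩, rfl⟩
  · rintro ⟨v, hv, rfl⟩
    exact (hf.mk_mem_matchingEdges_sdiff_iff v).mpr hv

lemma two_mul_ncard_matchingEdges_sdiff [Finite V] (hf : Involutive f) (hg : Involutive g)
    (hg' : ∀ v, g v ≠ v) :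
    2 * (matchingEdges g \ matchingEdges f).ncard = {v | g v ≠ f v}.ncard := by
  classical
  have := Fintype.ofFinite V
  set S := Finset.univ.filter fun v => g v ≠ f v
  have hfiber : ∀ e ∈ S.image fun v => s(v, g v),
      (S.filter fun v => s(v, g v) = e).card = 2 := by
    simp only [Finset.mem_image]
    rintro _ ⟨a, ha, rfl⟩
    have : {v ∈ S | s(v, g v) = s(a, g a)} = {a, g a} := by
      ext v
      simp only [S, Finset.mem_filter, Finset.mem_univ, true_and, Finset.mem_insert,
        Finset.mem_singleton, Sym2.eq_iff] at ha ⊢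
      grind [Involutive]
    rw [this, Finset.card_pair (hg' a).symm]
  rw [hf.matchingEdges_sdiff_eq_image, show {v | g v ≠ f v} = ↑S by simp [S],
    ← Finset.coe_image, Set.ncard_coe_finset, Set.ncard_coe_finset,
    Finset.card_eq_sum_card_image (fun v => s(v, g v)) S, Finset.sum_const_nat hfiber, mul_comm]

lemma disjoint_matchingEdges_diagSet (hf' : ∀ v, f v ≠ v) :
    Disjoint (matchingEdges f) Sym2.diagSet := by
  refine Set.disjoint_left.mpr ?_
  rintro _ ⟨v, rfl⟩ hv
  exact hf' v (Sym2.mk_isDiag_iff.mp hv).symm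

lemma two_mul_ncard_matchingEdges [Finite V] (hg : Involutive g) (hg' : ∀ v, g v ≠ v) :
    2 * (matchingEdges g).ncard = Nat.card V := by
  have hdiag : matchingEdges g \ matchingEdges id = matchingEdges g := by
    refine sdiff_eq_left.mpr (Set.disjoint_left.mpr ?_)
    rintro _ ⟨v, rfl⟩ hv
    exact hg' v ((Involutive.mk_mem_matchingEdges_iff (f := id) fun _ => rfl).mp hv).symm
  rw [← hdiag, two_mul_ncard_matchingEdges_sdiff (fun _ => rfl) hg hg']
  simp [hg']

lemma two_le_ncard_matchingEdges_sdiff [Finite V] (hf : Involutive f) (hg : Involutive g)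
    (hf' : ∀ v, f v ≠ v)
    (hfg : f ≠ g) : 2 ≤ (matchingEdges g \ matchingEdges f).ncard := by
  obtain ⟨a, ha⟩ := ne_iff.mp hfg
  refine (Set.one_lt_ncard_iff).mpr ⟨s(a, g a), s(f a, g (f a)),
    (hf.mk_mem_matchingEdges_sdiff_iff a).mpr (Ne.symm ha),
    (hf.mk_mem_matchingEdges_sdiff_iff (f a)).mpr ?_, ?_⟩
  · grind [Involutive]
  · simp only [ne_eq, Sym2.eq_iff]
    grind [Involutive]

lemma eq_of_matchingEdges_sdiff_eq (hf : Involutive f) (hg : Involutive g) (hh : Involutive h)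
    (hgh : matchingEdges g \ matchingEdges f = matchingEdges h \ matchingEdges f) : g = h := by
  have key : ∀ {g h : V → V} (v : V), Involutive h →
      matchingEdges g \ matchingEdges f = matchingEdges h \ matchingEdges f →
      g v ≠ f v → h v = g v := fun v hh hgh hv =>
    hh.mk_mem_matchingEdges_iff.mp (hgh ▸ (hf.mk_mem_matchingEdges_sdiff_iff v).mpr hv).1
  funext v
  by_cases hgv : g v = f v
  · by_cases hhv : h v = f v
    · rw [hgv, hhv]
    · exact key v hg hgh.symm hhv
  · exact (key v hh hgh hgv).symm

lemma four_le_ncard_of_mem {α : Type*} {s : Set α} (hs : s.Finite) {a b c d : α}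
    (ha : a ∈ s) (hb : b ∈ s) (hc : c ∈ s) (hd : d ∈ s) (hab : a ≠ b) (hac : a ≠ c)
    (had : a ≠ d) (hbc : b ≠ c) (hbd : b ≠ d) (hcd : c ≠ d) : 4 ≤ s.ncard :=
  calc 4 = ({a, b, c, d} : Set α).ncard := by
        rw [Set.ncard_insert_of_notMem (by simp [hab, hac, had]),
          Set.ncard_insert_of_notMem (by simp [hbc, hbd]), Set.ncard_pair hcd]
    _ ≤ s.ncard := Set.ncard_le_ncard (by simp [Set.insert_subset_iff, *]) hs

/-- By `hagree`, `h` agrees with `g` at `f x` and at `f (g x)`; the four edges exhibited depend on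
whether these two vertices are `g`-partners. -/
lemma four_le_ncard_union_sdiff_of_agree [Finite V] (hf : Involutive f) (hg : Involutive g)
    (hh : Involutive h) (hf' : ∀ v, f v ≠ v) (hg' : ∀ v, g v ≠ v) {x : V} (hgx : g x ≠ f x)
    (hhx : h x ≠ g x) (hagree : ∀ v, g v ≠ f v → v ≠ x → v ≠ g x → h v = g v) :
    4 ≤ ((matchingEdges g ∪ matchingEdges h) \ matchingEdges f).ncard := by
  set U := (matchingEdges g ∪ matchingEdges h) \ matchingEdges f
  have hgU : ∀ v, g v ≠ f v → s(v, g v) ∈ U := fun v hv =>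
    Set.sdiff_subset_sdiff_left Set.subset_union_left
      ((hf.mk_mem_matchingEdges_sdiff_iff v).mpr hv)
  have hhU : ∀ v, h v ≠ f v → s(v, h v) ∈ U := fun v hv =>
    Set.sdiff_subset_sdiff_left Set.subset_union_right
      ((hf.mk_mem_matchingEdges_sdiff_iff v).mpr hv)
  have hy : h (f x) = g (f x) := hagree _ (by grind [Involutive]) (hf' x) hgx.symm
  have hz : h (f (g x)) = g (f (g x)) :=
    hagree _ (by grind [Involutive]) (by grind [Involutive]) (hf' (g x))
  by_cases hyz : g (f x) = f (g x)
  · refine four_le_ncard_of_mem (Set.toFinite _) (hgU x hgx) (hgU (f x) ?_) (hhU x ?_)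
      (hhU (g x) ?_) ?_ ?_ ?_ ?_ ?_ ?_ <;> grind [Involutive, Sym2.eq_iff]
  · refine four_le_ncard_of_mem (Set.toFinite _) (hgU x hgx) (hgU (f x) ?_)
      (hgU (f (g x)) ?_) (hhU x ?_) ?_ ?_ ?_ ?_ ?_ ?_ <;> grind [Involutive, Sym2.eq_iff]

lemma four_le_ncard_union_sdiff_of_not_subset [Finite V] (hf : Involutive f) (hg : Involutive g)
    (hh : Involutive h) (hf' : ∀ v, f v ≠ v) (hg' : ∀ v, g v ≠ v) (hfh : f ≠ h)
    (hgh : ¬ matchingEdges g \ matchingEdges f ⊆ matchingEdges h \ matchingEdges f) :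
    4 ≤ ((matchingEdges g ∪ matchingEdges h) \ matchingEdges f).ncard := by
  obtain ⟨_, ⟨⟨x, rfl⟩, hxf⟩, hxh⟩ := Set.not_subset.mp hgh
  have hgx : g x ≠ f x :=
    (hf.mk_mem_matchingEdges_sdiff_iff x).mp ⟨mk_mem_matchingEdges g x, hxf⟩
  have hhx : h x ≠ g x := fun hx => hxh ⟨hh.mk_mem_matchingEdges_iff.mpr hx, hxf⟩
  by_cases hagree : ∀ v, g v ≠ f v → v ≠ x → v ≠ g x → h v = g v
  · exact four_le_ncard_union_sdiff_of_agree hf hg hh hf' hg' hgx hhx hagree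
  push Not at hagree
  obtain ⟨v, hvf, hvx, hvgx, hvh⟩ := hagree
  set X := matchingEdges g \ matchingEdges f
  set Y := matchingEdges h \ matchingEdges f
  have hxX : s(x, g x) ∈ X \ Y := ⟨⟨mk_mem_matchingEdges g x, hxf⟩, hxh⟩
  have hvX : s(v, g v) ∈ X \ Y := ⟨(hf.mk_mem_matchingEdges_sdiff_iff v).mpr hvf,
    fun hv => hvh (hh.mk_mem_matchingEdges_iff.mp hv.1)⟩
  calc 4 ≤ (X \ Y).ncard + Y.ncard :=
        Nat.add_le_add ((Set.one_lt_ncard_iff).mpr ⟨_, _, hxX, hvX, by grind [Sym2.eq_iff]⟩)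
          (two_le_ncard_matchingEdges_sdiff hf hh hf' hfh)
    _ = (X ∪ Y).ncard := Set.ncard_sdiff_add_ncard _ _
    _ = _ := by rw [Set.union_sdiff_distrib]

lemma four_le_ncard_union_sdiff [Finite V] (hf : Involutive f) (hg : Involutive g)
    (hh : Involutive h) (hf' : ∀ v, f v ≠ v) (hg' : ∀ v, g v ≠ v) (hh' : ∀ v, h v ≠ v)
    (hfg : f ≠ g) (hfh : f ≠ h) (hgh : g ≠ h) :
    4 ≤ ((matchingEdges g ∪ matchingEdges h) \ matchingEdges f).ncard := by
  by_cases hsub : matchingEdges g \ matchingEdges f ⊆ matchingEdges h \ matchingEdges f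
  · by_cases hsub' : matchingEdges h \ matchingEdges f ⊆ matchingEdges g \ matchingEdges f
    · exact absurd (eq_of_matchingEdges_sdiff_eq hf hg hh (hsub.antisymm hsub')) hgh
    · rw [Set.union_comm]
      exact four_le_ncard_union_sdiff_of_not_subset hf hh hg hf' hh' hfg hsub'
  · exact four_le_ncard_union_sdiff_of_not_subset hf hg hh hf' hg' hfh hsub

namespace SimpleGraph

variable {G : SimpleGraph V}

namespace Subgraph.IsPerfectMatching

variable {M M' : G.Subgraph}

noncomputable def partner (hM : M.IsPerfectMatching) (v : V) : V :=
  (isPerfectMatching_iff.mp hM v).choose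

lemma adj_partner (hM : M.IsPerfectMatching) (v : V) : M.Adj v (hM.partner v) :=
  (isPerfectMatching_iff.mp hM v).choose_spec.1

lemma partner_eq_of_adj (hM : M.IsPerfectMatching) {v w : V} (hvw : M.Adj v w) :
    hM.partner v = w :=
  ((isPerfectMatching_iff.mp hM v).choose_spec.2 w hvw).symm

lemma involutive_partner (hM : M.IsPerfectMatching) : Involutive hM.partner :=
  fun v => hM.partner_eq_of_adj (hM.adj_partner v).symm

lemma partner_ne (hM : M.IsPerfectMatching) (v : V) : hM.partner v ≠ v :=
  (hM.adj_partner v).ne.symm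

lemma edgeSet_eq_matchingEdges (hM : M.IsPerfectMatching) :
    M.edgeSet = matchingEdges hM.partner := by
  ext e
  induction e using Sym2.ind with
  | h v w =>
    rw [Subgraph.mem_edgeSet, hM.involutive_partner.mk_mem_matchingEdges_iff]
    exact ⟨hM.partner_eq_of_adj, fun hvw => hvw ▸ hM.adj_partner v⟩

lemma eq_of_partner_eq (hM : M.IsPerfectMatching) (hM' : M'.IsPerfectMatching)
    (h : hM.partner = hM'.partner) : M = M' :=
  Subgraph.IsMatching.injOn_edgeSet hM.1 hM'.1 (by
    rw [hM.edgeSet_eq_matchingEdges, hM'.edgeSet_eq_matchingEdges, h])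

end Subgraph.IsPerfectMatching

def matchingOfInvolutive (hf : Involutive f) (hadj : ∀ v, G.Adj v (f v)) : G.Subgraph where
  verts := Set.univ
  Adj v w := f v = w
  adj_sub := by rintro v _ rfl; exact hadj v
  edge_vert _ := Set.mem_univ _
  symm := ⟨fun v w hvw => by rw [← hvw, hf]⟩

lemma isPerfectMatching_matchingOfInvolutive (hf : Involutive f) (hadj : ∀ v, G.Adj v (f v)) :
    (matchingOfInvolutive hf hadj).IsPerfectMatching :=
  Subgraph.isPerfectMatching_iff.mpr fun v => ⟨f v, rfl, fun _ hw => Eq.symm hw⟩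

lemma two_le_perfmat [Finite V] (hf : Involutive f) (hg : Involutive g)
    (hfadj : ∀ v, G.Adj v (f v)) (hgadj : ∀ v, G.Adj v (g v)) (hfg : f ≠ g) :
    2 ≤ perfmat G := by
  refine (Set.one_lt_ncard_iff).mpr ⟨_, _, isPerfectMatching_matchingOfInvolutive hf hfadj,
    isPerfectMatching_matchingOfInvolutive hg hgadj, fun h => hfg (funext fun v => ?_)⟩
  have hv : (matchingOfInvolutive hf hfadj).Adj v (f v) := rfl
  rw [h] at hv
  exact Eq.symm hv

theorem perfmat_le_two [Finite V] (hG : 2 * G.edgeSet.ncard ≤ Nat.card V + 6) :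
    perfmat G ≤ 2 := by
  by_contra! h3
  obtain ⟨M₁, M₂, M₃, h₁, h₂, h₃, h₁₂, h₁₃, h₂₃⟩ := (Set.two_lt_ncard_iff).mp h3
  have hsub : matchingEdges h₁.partner ∪
      ((matchingEdges h₂.partner ∪ matchingEdges h₃.partner) \ matchingEdges h₁.partner) ⊆
        G.edgeSet := by
    simp only [← Subgraph.IsPerfectMatching.edgeSet_eq_matchingEdges]
    exact Set.union_subset M₁.edgeSet_subset
      (Set.sdiff_subset.trans (Set.union_subset M₂.edgeSet_subset M₃.edgeSet_subset))
  have hcard := Set.ncard_le_ncard hsub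
  rw [Set.ncard_union_eq Set.disjoint_sdiff_right] at hcard
  have hM₁ := two_mul_ncard_matchingEdges h₁.involutive_partner h₁.partner_ne
  have hM₂₃ := four_le_ncard_union_sdiff h₁.involutive_partner h₂.involutive_partner
    h₃.involutive_partner h₁.partner_ne h₂.partner_ne h₃.partner_ne
    (fun h => h₁₂ (h₁.eq_of_partner_eq h₂ h)) (fun h => h₁₃ (h₁.eq_of_partner_eq h₃ h))
    (fun h => h₂₃ (h₂.eq_of_partner_eq h₃ h))
  omega

end SimpleGraph

end Matchings

section ExtremalGraph

variable (n : ℕ) {p : ℕ → ℕ}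

def extendMatching (p : ℕ → ℕ) (hp : ∀ k < 4, p k < 4) (v : Fin (6 + 2 * n)) :
    Fin (6 + 2 * n) :=
  ⟨if v.val < 4 then p v else if v.val % 2 = 0 then v + 1 else v - 1, by
    have := hp v
    split_ifs <;> omega⟩

variable {n}

lemma involutive_extendMatching (hp : ∀ k < 4, p k < 4) (hp2 : ∀ k < 4, p (p k) = k) :
    Involutive (extendMatching n p hp) := by
  intro v
  have := hp v
  have := hp2 v
  ext
  simp only [extendMatching]
  split_ifs <;> omega

lemma extendMatching_ne (hp : ∀ k < 4, p k < 4) (hp' : ∀ k < 4, p k ≠ k)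
    (v : Fin (6 + 2 * n)) : extendMatching n p hp v ≠ v := by
  have := hp' v
  rw [ne_eq, Fin.ext_iff]
  simp only [extendMatching]
  split_ifs <;> omega

variable (n)

abbrev matchingA : Fin (6 + 2 * n) → Fin (6 + 2 * n) :=
  extendMatching n (fun k => (k + 2) % 4) (by omega)

abbrev matchingB : Fin (6 + 2 * n) → Fin (6 + 2 * n) :=
  extendMatching n (fun k => 3 - k) (by omega)

/-- `K₄` on `{0, 1, 2, 3}` minus the edge `{2, 3}`, together with the edges `{2k, 2k + 1}` for
`k ≥ 2`. -/
def extremalGraph : SimpleGraph (Fin (6 + 2 * n)) :=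
  SimpleGraph.fromEdgeSet (insert s(⟨0, by omega⟩, ⟨1, by omega⟩)
    (matchingEdges (matchingA n) ∪ matchingEdges (matchingB n)))

lemma involutive_matchingA : Involutive (matchingA n) := involutive_extendMatching _ (by omega)
lemma involutive_matchingB : Involutive (matchingB n) := involutive_extendMatching _ (by omega)
lemma matchingA_ne : ∀ v, matchingA n v ≠ v := extendMatching_ne _ (by omega)
lemma matchingB_ne : ∀ v, matchingB n v ≠ v := extendMatching_ne _ (by omega)

lemma extremalGraph_adj {v w : Fin (6 + 2 * n)} :
    (extremalGraph n).Adj v w ↔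
      (s(v, w) = s(⟨0, by omega⟩, ⟨1, by omega⟩) ∨ matchingA n v = w ∨ matchingB n v = w) ∧
        v ≠ w := by
  rw [extremalGraph, SimpleGraph.fromEdgeSet_adj, Set.mem_insert_iff, Set.mem_union,
    (involutive_matchingA n).mk_mem_matchingEdges_iff,
    (involutive_matchingB n).mk_mem_matchingEdges_iff]

lemma ndeg_extremalGraph_zero : ndeg (extremalGraph n) ⟨0, by omega⟩ = 3 := by
  have hN : (extremalGraph n).neighborSet ⟨0, by omega⟩ =
      {⟨1, by omega⟩, ⟨2, by omega⟩, ⟨3, by omega⟩} := by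
    ext w
    simp only [SimpleGraph.mem_neighborSet, extremalGraph_adj, Sym2.eq_iff, Fin.ext_iff,
      extendMatching, Set.mem_insert_iff, Set.mem_singleton_iff, ne_eq]
    norm_num
    omega
  rw [ndeg, hN]
  exact Set.ncard_eq_three.mpr ⟨_, _, _, by simp, by simp, by simp, rfl⟩

lemma ndeg_extremalGraph_four : ndeg (extremalGraph n) ⟨4, by omega⟩ = 1 := by
  have hN : (extremalGraph n).neighborSet ⟨4, by omega⟩ = {⟨5, by omega⟩} := by
    ext w
    simp only [SimpleGraph.mem_neighborSet, extremalGraph_adj, Sym2.eq_iff, Fin.ext_iff,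
      extendMatching, Set.mem_singleton_iff, ne_eq]
    norm_num
    omega
  rw [ndeg, hN, Set.ncard_singleton]

lemma ncard_setOf_matchingB_ne_matchingA : {v | matchingB n v ≠ matchingA n v}.ncard = 4 := by
  have hS : {v | matchingB n v ≠ matchingA n v} = {v | v.val < 4} := by
    ext v
    simp only [Set.mem_ofPred_eq, ne_eq, Fin.ext_iff, extendMatching]
    split_ifs <;> omega
  rw [hS, Set.ncard_eq_toFinset_card', Set.toFinset_ofPred, Fin.card_filter_val_lt]
  omega

lemma ncard_edgeSet_extremalGraph : (extremalGraph n).edgeSet.ncard = 6 + n := by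
  have hA := two_mul_ncard_matchingEdges (involutive_matchingA n) (matchingA_ne n)
  have hBA := two_mul_ncard_matchingEdges_sdiff (involutive_matchingA n)
    (involutive_matchingB n) (matchingB_ne n)
  rw [Nat.card_eq_fintype_card, Fintype.card_fin] at hA
  rw [ncard_setOf_matchingB_ne_matchingA] at hBA
  have hdiag : Disjoint (insert s(⟨0, by omega⟩, ⟨1, by omega⟩)
      (matchingEdges (matchingA n) ∪ matchingEdges (matchingB n))) Sym2.diagSet :=
    Set.disjoint_insert_left.mpr ⟨by simp, Set.disjoint_union_left.mpr
      ⟨disjoint_matchingEdges_diagSet (matchingA_ne n),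
        disjoint_matchingEdges_diagSet (matchingB_ne n)⟩⟩
  have h01 : s(⟨0, by omega⟩, ⟨1, by omega⟩) ∉
      matchingEdges (matchingA n) ∪ matchingEdges (matchingB n) := by
    rw [Set.mem_union, (involutive_matchingA n).mk_mem_matchingEdges_iff,
      (involutive_matchingB n).mk_mem_matchingEdges_iff]
    simp [Fin.ext_iff, extendMatching]
  rw [extremalGraph, SimpleGraph.edgeSet_fromEdgeSet, sdiff_eq_left.mpr hdiag,
    Set.ncard_insert_of_notMem h01, Set.union_comm, ← Set.ncard_sdiff_add_ncard]
  omega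

lemma two_le_perfmat_extremalGraph : 2 ≤ perfmat (extremalGraph n) := by
  refine SimpleGraph.two_le_perfmat (involutive_matchingA n) (involutive_matchingB n)
    (fun v => (extremalGraph_adj n).mpr ⟨Or.inr (Or.inl rfl), (matchingA_ne n v).symm⟩)
    (fun v => (extremalGraph_adj n).mpr ⟨Or.inr (Or.inr rfl), (matchingB_ne n v).symm⟩)
    fun h => ?_
  have := congrFun h ⟨0, by omega⟩
  simp [Fin.ext_iff, extendMatching] at this

end ExtremalGraph

theorem stmt_17_general (n : ℕ) :
    ∃ G : SimpleGraph (Fin (6 + 2 * n)),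
      (¬ ∀ u v, |(ndeg G u : ℤ) - (ndeg G v : ℤ)| ≤ 1) ∧
      G.edgeSet.ncard = 6 + n ∧
      ∀ H : SimpleGraph (Fin (6 + 2 * n)), H.edgeSet.ncard = 6 + n →
        perfmat H ≤ perfmat G := by
  refine ⟨extremalGraph n, fun h => ?_, ncard_edgeSet_extremalGraph n, fun H hH => ?_⟩
  · have := h ⟨0, by omega⟩ ⟨4, by omega⟩
    rw [ndeg_extremalGraph_zero, ndeg_extremalGraph_four] at this
    norm_num at this
  · refine (SimpleGraph.perfmat_le_two ?_).trans (two_le_perfmat_extremalGraph n)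
    rw [hH, Nat.card_eq_fintype_card, Fintype.card_fin]
    omega

/-- For every `n ≥ 1` there is a graph with `6+2n` vertices and `6+n` edges that is not
almost regular but maximizes the number of perfect matchings among all graphs with
`6+2n` vertices and `6+n` edges. -/
theorem stmt_17 (n : ℕ) (hn : 1 ≤ n) :
    ∃ G : SimpleGraph (Fin (6 + 2 * n)),
      (¬ ∀ u v, |(ndeg G u : ℤ) - (ndeg G v : ℤ)| ≤ 1) ∧
      G.edgeSet.ncard = 6 + n ∧
      ∀ H : SimpleGraph (Fin (6 + 2 * n)), H.edgeSet.ncard = 6 + n →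
        perfmat H ≤ perfmat G :=
  stmt_17_general n
end
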